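/- arXiv:1906.04916 — 2 statements merged into one kernel-verified Lean document; each statement's English description precedes it below -/
import Mathlib

section
/- For every k ≥ 2, the quotient group G_{k+1}^k / K_k is naturally isomorphic to the free product (H_k / K_k) * ⟨b_{k+1}⟩, where ⟨b_{k+1}⟩ ≅ ℤ/2: precisely, K_k is a normal subgroup of G_{k+1}^k contained in H_k, and the homomorphism from the free product (H_k ⧸ K_k) * (ℤ/2) to G_{k+1}^k ⧸ K_k, induced on the first factor by the inclusion H_k → G_{k+1}^k and sending the generator of ℤ/2 to the class of b_{k+1}, is an isomorphism. -/
/-- The relators of the group `G_{k+1}^k`: the squares `b_i²` of all generators, together with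
`(b_{σ(1)} b_{σ(2)} ⋯ b_{σ(k+1)})²` for every permutation `σ` of the `k+1` generators. -/
def relsG (k : ℕ) : Set (FreeGroup (Fin (k + 1))) :=
  (Set.range fun i : Fin (k + 1) => FreeGroup.of i ^ 2) ∪
    (Set.range fun σ : Equiv.Perm (Fin (k + 1)) =>
      ((List.ofFn fun j : Fin (k + 1) => FreeGroup.of (σ j)).prod) ^ 2)

/-- The group `G_{k+1}^k`. -/
abbrev Gnk (k : ℕ) : Type := PresentedGroup (relsG k)

/-- The subgroup `H_k` of `G_{k+1}^k` generated by the (images of the) first `k` generators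
`b_1, …, b_k`. -/
def Hk (k : ℕ) : Subgroup (Gnk k) :=
  Subgroup.closure (Set.range fun i : Fin k =>
    PresentedGroup.of (rels := relsG k) (Fin.castSucc i))

/-- The subgroup `K_k` of `G_{k+1}^k` generated by the products
`B_σ = b_{σ(1)} b_{σ(2)} ⋯ b_{σ(k)}` over all permutations `σ` of `{1, …, k}`. -/
def Kk (k : ℕ) : Subgroup (Gnk k) :=
  Subgroup.closure (Set.range fun σ : Equiv.Perm (Fin k) =>
    ((List.ofFn fun j : Fin k =>
      PresentedGroup.of (rels := relsG k) (Fin.castSucc (σ j))).prod))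


/-!
Conjugating `B = u b_i v` (a product of `b_1, …, b_k` in some order) by `b_i`, `i ≤ k`, gives
`(b_i u v) (u b_i v)⁻¹ (u v b_i) ∈ K_k`, and the relator `(b_{k+1} B)² = 1` says that `b_{k+1}`
inverts `B`; hence `K_k` is normal. The inverse of the isomorphism sends `b_i` to `[b_i] ∈ H_k/K_k`
for `i ≤ k` and `b_{k+1}` to the generator `s` of `ℤ/2`. It respects the relators: an order of all
`k + 1` generators reads `u b_{k+1} v` with `uv ∈ K_k`, so `[v] = [u]⁻¹` and `(u b_{k+1} v)²`
maps to `([u] s [u]⁻¹)² = 1`.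
-/

open List

section Subgroup

variable {G : Type*} [Group G]

theorem Subgroup.conj_mem_closure {s : Set G} {g y : G}
    (hg : ∀ x ∈ s, g * x * g⁻¹ ∈ Subgroup.closure s) (hy : y ∈ Subgroup.closure s) :
    g * y * g⁻¹ ∈ Subgroup.closure s := by
  have hmap : (Subgroup.closure s).map (MulAut.conj g).toMonoidHom ≤ Subgroup.closure s := by
    rw [MonoidHom.map_closure, Subgroup.closure_le]
    rintro _ ⟨x, hx, rfl⟩
    exact hg x hx
  exact hmap ⟨y, hy, rfl⟩

theorem Subgroup.normal_closure_of_conj_mem {s t : Set G} (ht : Subgroup.closure t = ⊤)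
    (ht_inv : ∀ g ∈ t, g⁻¹ ∈ t) (hconj : ∀ g ∈ t, ∀ x ∈ s, g * x * g⁻¹ ∈ Subgroup.closure s) :
    (Subgroup.closure s).Normal := by
  rw [← Subgroup.normalizer_eq_top_iff, eq_top_iff, ← ht, Subgroup.closure_le]
  intro g hg
  refine fun y => ⟨Subgroup.conj_mem_closure (hconj g hg), fun hy => ?_⟩
  simpa only [SetLike.mem_coe, mul_assoc, inv_mul_cancel_left, inv_inv, inv_mul_cancel, mul_one]
    using Subgroup.conj_mem_closure (hconj g⁻¹ (ht_inv g hg)) hy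

end Subgroup

section FinEnumerations

variable {n : ℕ}

theorem List.exists_eq_ofFn_of_perm_finRange {l : List (Fin n)} (h : l ~ finRange n) :
    ∃ σ : Equiv.Perm (Fin n), l = ofFn σ := by
  have hlen : l.length = n := by simpa using h.length_eq
  have hinj : Function.Injective l.get :=
    nodup_iff_injective_get.1 (h.nodup_iff.2 (nodup_finRange _))
  refine ⟨(finCongr hlen).symm.trans (Equiv.ofBijective l.get
    ((Fintype.bijective_iff_injective_and_card _).2 ⟨hinj, by simp [hlen]⟩)), ?_⟩
  conv_lhs => rw [← ofFn_get l, ofFn_congr hlen]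
  rfl

theorem List.perm_finRange_succ_iff {u v : List (Fin n)} :
    u.map Fin.castSucc ++ Fin.last n :: v.map Fin.castSucc ~ finRange (n + 1) ↔
      u ++ v ~ finRange n := by
  have hl : u.map Fin.castSucc ++ Fin.last n :: v.map Fin.castSucc ~
      Fin.last n :: (u ++ v).map Fin.castSucc := by
    rw [map_append]; exact perm_middle
  have hr : finRange (n + 1) ~ Fin.last n :: (finRange n).map Fin.castSucc := by
    rw [finRange_succ_last]; exact perm_append_singleton _ _
  refine Iff.trans ?_
    ((perm_cons (Fin.last n)).trans (map_perm_map_iff (Fin.castSucc_injective n)))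
  exact ⟨fun h => hl.symm.trans (h.trans hr), fun h => hl.trans (h.trans hr.symm)⟩

theorem List.exists_eq_append_last_cons_of_perm_finRange {l : List (Fin (n + 1))}
    (h : l ~ finRange (n + 1)) :
    ∃ u v : List (Fin n), l = u.map Fin.castSucc ++ Fin.last n :: v.map Fin.castSucc := by
  obtain ⟨u', v', rfl⟩ := append_of_mem (h.mem_iff.2 (mem_finRange (Fin.last n)))
  have hnd := h.nodup_iff.2 (nodup_finRange _)
  have hlift :
      ∀ w : List (Fin (n + 1)), Fin.last n ∉ w → w ∈ Set.range (map Fin.castSucc) := by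
    intro w hw
    rw [Set.range_list_map]
    exact fun x hx => Fin.exists_castSucc_eq.2 fun hxl => hw (hxl ▸ hx)
  obtain ⟨u, rfl⟩ := hlift u' fun hu => disjoint_of_nodup_append hnd hu mem_cons_self
  obtain ⟨v, rfl⟩ := hlift v' (nodup_cons.1 (nodup_append.1 hnd).2.1).1
  exact ⟨u, v, rfl⟩

end FinEnumerations

section PermWords

variable {G : Type*} [Group G] {n : ℕ}

def permWords (b : Fin n → G) : Set G :=
  {x | ∃ l : List (Fin n), l ~ finRange n ∧ (l.map b).prod = x}

theorem range_prod_ofFn_perm (b : Fin n → G) :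
    Set.range (fun σ : Equiv.Perm (Fin n) => (ofFn fun j => b (σ j)).prod) = permWords b := by
  ext x
  constructor
  · rintro ⟨σ, rfl⟩
    exact ⟨ofFn σ, σ.ofFn_comp_perm id, by rw [map_ofFn]; rfl⟩
  · rintro ⟨l, hl, rfl⟩
    obtain ⟨σ, rfl⟩ := exists_eq_ofFn_of_perm_finRange hl
    exact ⟨σ, by rw [map_ofFn]; rfl⟩

variable {b : Fin n → G}

theorem prod_map_mem_closure_permWords {l : List (Fin n)} (hl : l ~ finRange n) :
    (l.map b).prod ∈ Subgroup.closure (permWords b) :=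
  Subgroup.subset_closure ⟨l, hl, rfl⟩

theorem conj_mem_closure_permWords (hb : ∀ i, (b i)⁻¹ = b i) (i : Fin n) {x : G}
    (hx : x ∈ permWords b) : b i * x * (b i)⁻¹ ∈ Subgroup.closure (permWords b) := by
  obtain ⟨l, hl, rfl⟩ := hx
  obtain ⟨u, v, rfl⟩ := append_of_mem (hl.mem_iff.2 (mem_finRange i))
  have hiuv : i :: (u ++ v) ~ finRange n := perm_middle.symm.trans hl
  have key : b i * ((u ++ i :: v).map b).prod * (b i)⁻¹ =
      ((i :: (u ++ v)).map b).prod * (((u ++ i :: v).map b).prod)⁻¹ *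
        (((u ++ v) ++ [i]).map b).prod := by
    simp only [map_append, map_cons, map_nil, prod_append, prod_cons, prod_nil, mul_one,
      mul_inv_rev, hb]
    group
  rw [key]
  refine mul_mem (mul_mem ?_ (inv_mem ?_)) ?_ <;> apply prod_map_mem_closure_permWords
  exacts [hiuv, hl, (perm_append_singleton _ _).trans hiuv]

end PermWords

section ZModHom

variable {M : Type*} [Monoid M]

variable {n : ℕ} [NeZero n]

def zmodPowHom (x : M) (hx : x ^ n = 1) : Multiplicative (ZMod n) →* M where
  toFun a := x ^ ZMod.val (Multiplicative.toAdd a)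
  map_one' := by simp
  map_mul' a b := by rw [toAdd_mul, ZMod.val_add, ← pow_eq_pow_mod _ hx, pow_add]

theorem zmodPowHom_ofAdd_one (x : M) (hx : x ^ n = 1) :
    zmodPowHom x hx (Multiplicative.ofAdd 1) = x := by
  change x ^ (1 : ZMod n).val = x
  rw [ZMod.val_one_eq_one_mod, ← pow_eq_pow_mod _ hx, pow_one]

theorem MonoidHom.ext_mzmod {f g : Multiplicative (ZMod n) →* M}
    (h : f (Multiplicative.ofAdd 1) = g (Multiplicative.ofAdd 1)) : f = g := by
  refine DFunLike.ext f g fun a => ?_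
  obtain ⟨a, rfl⟩ : ∃ m : ℕ, Multiplicative.ofAdd (m : ZMod n) = a :=
    ⟨ZMod.val (Multiplicative.toAdd a), by rw [ZMod.natCast_zmod_val]; rfl⟩
  rw [← nsmul_one, ofAdd_nsmul, _root_.map_pow, _root_.map_pow, h]

end ZModHom

theorem Monoid.Coprod.inr_ofAdd_one_sq {N : Type*} [Monoid N] :
    (Monoid.Coprod.inr (M := N) (Multiplicative.ofAdd (1 : ZMod 2))) ^ 2 = 1 := by
  rw [← map_pow, show Multiplicative.ofAdd (1 : ZMod 2) ^ 2 = 1 by decide, map_one]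

namespace Gnk

variable {k : ℕ}

abbrev gen (k : ℕ) (i : Fin (k + 1)) : Gnk k := PresentedGroup.of (rels := relsG k) i

theorem gen_sq (i : Fin (k + 1)) : gen k i ^ 2 = 1 := by
  have h := PresentedGroup.one_of_mem (show FreeGroup.of i ^ 2 ∈ relsG k from Or.inl ⟨i, rfl⟩)
  rwa [map_pow] at h

theorem inv_gen (i : Fin (k + 1)) : (gen k i)⁻¹ = gen k i :=
  inv_eq_of_mul_eq_one_right (by rw [← sq, gen_sq])

theorem prod_map_gen_sq {l : List (Fin (k + 1))} (hl : l ~ finRange (k + 1)) :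
    (l.map (gen k)).prod ^ 2 = 1 := by
  obtain ⟨σ, rfl⟩ := exists_eq_ofFn_of_perm_finRange hl
  have h := PresentedGroup.one_of_mem
    (show (ofFn fun j => FreeGroup.of (σ j)).prod ^ 2 ∈ relsG k from Or.inr ⟨σ, rfl⟩)
  rw [map_pow, map_list_prod, map_ofFn] at h
  rw [map_ofFn]
  exact h

theorem Kk_eq_closure_permWords :
    Kk k = Subgroup.closure (permWords (gen k ∘ Fin.castSucc)) := by
  rw [Kk, ← range_prod_ofFn_perm]
  rfl

theorem gen_last_conj_eq_inv {l : List (Fin k)} (hl : l ~ finRange k) :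
    gen k (Fin.last k) * (l.map (gen k ∘ Fin.castSucc)).prod * (gen k (Fin.last k))⁻¹ =
      (l.map (gen k ∘ Fin.castSucc)).prod⁻¹ := by
  have hsq := prod_map_gen_sq (perm_finRange_succ_iff.2 (show [] ++ l ~ finRange k from hl))
  rw [map_nil, nil_append, map_cons, prod_cons, map_map, sq] at hsq
  rw [inv_gen]
  exact eq_inv_of_mul_eq_one_left (by simpa only [mul_assoc] using hsq)

theorem Kk_normal : (Kk k).Normal := by
  rw [Kk_eq_closure_permWords]
  refine Subgroup.normal_closure_of_conj_mem (PresentedGroup.closure_range_of _) ?_ ?_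
  · rintro _ ⟨i, rfl⟩
    exact ⟨i, (inv_gen i).symm⟩
  · rintro _ ⟨i, rfl⟩ x hx
    induction i using Fin.lastCases with
    | last =>
      obtain ⟨l, hl, rfl⟩ := hx
      rw [gen_last_conj_eq_inv hl]
      exact inv_mem (prod_map_mem_closure_permWords hl)
    | cast i => exact conj_mem_closure_permWords (fun j => inv_gen j.castSucc) i hx

theorem Kk_le_Hk : Kk k ≤ Hk k := by
  rw [Kk_eq_closure_permWords, Subgroup.closure_le]
  rintro _ ⟨l, -, rfl⟩
  exact Subgroup.list_prod_mem _ (forall_mem_map.2 fun i _ => Subgroup.subset_closure ⟨i, rfl⟩)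

variable (k)

instance : (Kk k).Normal := Kk_normal

instance : ((Kk k).subgroupOf (Hk k)).Normal := Kk_normal.subgroupOf _

def genH (i : Fin k) : Hk k := ⟨gen k i.castSucc, Subgroup.subset_closure ⟨i, rfl⟩⟩

def inlMk :
    Hk k →* Monoid.Coprod (Hk k ⧸ (Kk k).subgroupOf (Hk k)) (Multiplicative (ZMod 2)) :=
  Monoid.Coprod.inl.comp (QuotientGroup.mk' _)

def coprodGen : Fin (k + 1) →
    Monoid.Coprod (Hk k ⧸ (Kk k).subgroupOf (Hk k)) (Multiplicative (ZMod 2)) :=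
  Fin.lastCases (Monoid.Coprod.inr (Multiplicative.ofAdd 1)) fun i => inlMk k (genH k i)

variable {k}

theorem coprodGen_last :
    coprodGen k (Fin.last k) = Monoid.Coprod.inr (Multiplicative.ofAdd 1) :=
  Fin.lastCases_last

theorem coprodGen_castSucc (i : Fin k) : coprodGen k i.castSucc = inlMk k (genH k i) :=
  Fin.lastCases_castSucc i

theorem coe_prod_map_genH (l : List (Fin k)) :
    ((l.map (genH k)).prod : Gnk k) = (l.map (gen k ∘ Fin.castSucc)).prod := by
  rw [← Subgroup.coe_subtype, map_list_prod, map_map]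
  rfl

theorem inlMk_prod_map_genH {l : List (Fin k)} (hl : l ~ finRange k) :
    inlMk k (l.map (genH k)).prod = 1 := by
  rw [inlMk, MonoidHom.comp_apply, QuotientGroup.mk'_apply, (QuotientGroup.eq_one_iff _).2,
    map_one]
  rw [Subgroup.mem_subgroupOf, coe_prod_map_genH, Kk_eq_closure_permWords]
  exact prod_map_mem_closure_permWords hl


theorem prod_map_coprodGen_sq {l : List (Fin (k + 1))} (hl : l ~ finRange (k + 1)) :
    (l.map (coprodGen k)).prod ^ 2 = 1 := by
  obtain ⟨u, v, rfl⟩ := exists_eq_append_last_cons_of_perm_finRange hl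
  have hB : inlMk k (v.map (genH k)).prod = (inlMk k (u.map (genH k)).prod)⁻¹ := by
    refine eq_inv_of_mul_eq_one_right ?_
    rw [← map_mul, ← prod_append, ← map_append,
      inlMk_prod_map_genH (perm_finRange_succ_iff.1 hl)]
  have hmap (w : List (Fin k)) :
      (w.map Fin.castSucc).map (coprodGen k) = (w.map (genH k)).map (inlMk k) := by
    simp only [map_map]
    exact map_congr_left fun i _ => coprodGen_castSucc i
  rw [map_append, map_cons, prod_append, prod_cons, hmap, hmap, ← map_list_prod, ← map_list_prod,
    hB, coprodGen_last, ← mul_assoc, conj_pow, Monoid.Coprod.inr_ofAdd_one_sq, mul_one, mul_inv_cancel]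

theorem coprodGen_relsG : ∀ r ∈ relsG k, FreeGroup.lift (coprodGen k) r = 1 := by
  rintro _ (⟨i, rfl⟩ | ⟨σ, rfl⟩)
  · rw [map_pow, FreeGroup.lift_apply_of]
    induction i using Fin.lastCases with
    | last => rw [coprodGen_last, Monoid.Coprod.inr_ofAdd_one_sq]
    | cast i =>
      rw [coprodGen_castSucc, ← map_pow, show genH k i ^ 2 = 1 from Subtype.ext (gen_sq _),
        map_one]
  · have h := prod_map_coprodGen_sq (σ.ofFn_comp_perm id)
    rw [map_ofFn] at h
    rw [map_pow, map_list_prod, map_ofFn]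
    simpa only [Function.comp_def, FreeGroup.lift_apply_of, id] using h

variable (k)

def toCoprod :
    Gnk k →* Monoid.Coprod (Hk k ⧸ (Kk k).subgroupOf (Hk k)) (Multiplicative (ZMod 2)) :=
  PresentedGroup.toGroup coprodGen_relsG

variable {k}

theorem toCoprod_gen (i : Fin (k + 1)) : toCoprod k (gen k i) = coprodGen k i :=
  PresentedGroup.toGroup.of coprodGen_relsG

theorem toCoprod_comp_subtype : (toCoprod k).comp (Hk k).subtype = inlMk k := by
  refine MonoidHom.eq_of_eqOn_dense Subgroup.closure_closure_coe_preimage ?_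
  rintro x ⟨i, hi⟩
  obtain rfl : x = genH k i := Subtype.ext hi.symm
  exact (toCoprod_gen _).trans (coprodGen_castSucc i)

theorem Kk_le_ker_toCoprod : Kk k ≤ (toCoprod k).ker := by
  refine Kk_eq_closure_permWords.le.trans ((Subgroup.closure_le _).2 ?_)
  rintro _ ⟨l, hl, rfl⟩
  rw [SetLike.mem_coe, MonoidHom.mem_ker, ← coe_prod_map_genH, ← Subgroup.coe_subtype,
    ← MonoidHom.comp_apply, toCoprod_comp_subtype, inlMk_prod_map_genH hl]

variable (k)

def quotientToCoprod :
    Gnk k ⧸ Kk k →* Monoid.Coprod (Hk k ⧸ (Kk k).subgroupOf (Hk k)) (Multiplicative (ZMod 2)) :=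
  QuotientGroup.lift _ (toCoprod k) Kk_le_ker_toCoprod

def coprodToQuotient :
    Monoid.Coprod (Hk k ⧸ (Kk k).subgroupOf (Hk k)) (Multiplicative (ZMod 2)) →* Gnk k ⧸ Kk k :=
  Monoid.Coprod.lift (QuotientGroup.map _ _ (Hk k).subtype le_rfl)
    (zmodPowHom (QuotientGroup.mk (gen k (Fin.last k)))
      (by rw [← QuotientGroup.mk_pow, gen_sq, QuotientGroup.mk_one]))

variable {k}

theorem coprodToQuotient_inl_mk (h : Hk k) :
    coprodToQuotient k (Monoid.Coprod.inl (QuotientGroup.mk h)) = QuotientGroup.mk (h : Gnk k) :=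
  rfl

theorem coprodToQuotient_inr_ofAdd_one :
    coprodToQuotient k (Monoid.Coprod.inr (Multiplicative.ofAdd 1)) =
      QuotientGroup.mk (gen k (Fin.last k)) := by
  rw [coprodToQuotient, Monoid.Coprod.lift_apply_inr, zmodPowHom_ofAdd_one]

variable (k)

theorem quotientToCoprod_comp_coprodToQuotient :
    (quotientToCoprod k).comp (coprodToQuotient k) = MonoidHom.id _ := by
  refine Monoid.Coprod.hom_ext (QuotientGroup.monoidHom_ext _ ?_) (MonoidHom.ext_mzmod ?_)
  · ext h
    exact DFunLike.congr_fun toCoprod_comp_subtype h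
  · simp only [MonoidHom.comp_apply, MonoidHom.id_apply]
    rw [coprodToQuotient_inr_ofAdd_one, quotientToCoprod, QuotientGroup.lift_mk, toCoprod_gen,
      coprodGen_last]

theorem coprodToQuotient_comp_quotientToCoprod :
    (coprodToQuotient k).comp (quotientToCoprod k) = MonoidHom.id _ := by
  refine QuotientGroup.monoidHom_ext _ (PresentedGroup.ext fun i => ?_)
  change coprodToQuotient k (toCoprod k (gen k i)) = QuotientGroup.mk (gen k i)
  rw [toCoprod_gen]
  induction i using Fin.lastCases with
  | last => rw [coprodGen_last, coprodToQuotient_inr_ofAdd_one]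
  | cast i =>
    rw [coprodGen_castSucc, inlMk, MonoidHom.comp_apply, QuotientGroup.mk'_apply,
      coprodToQuotient_inl_mk]
    rfl

def coprodEquivQuotient :
    Monoid.Coprod (Hk k ⧸ (Kk k).subgroupOf (Hk k)) (Multiplicative (ZMod 2)) ≃* Gnk k ⧸ Kk k :=
  MonoidHom.toMulEquiv _ _ (quotientToCoprod_comp_coprodToQuotient k)
    (coprodToQuotient_comp_quotientToCoprod k)

end Gnk

theorem stmt_11_general (k : ℕ) :
    ∃ _ : (Kk k).Normal, Kk k ≤ Hk k ∧
      ∃ _ : ((Kk k).subgroupOf (Hk k)).Normal,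
        ∃ e : Monoid.Coprod ((Hk k) ⧸ ((Kk k).subgroupOf (Hk k))) (Multiplicative (ZMod 2)) ≃*
            ((Gnk k) ⧸ (Kk k)),
          (∀ h : Hk k, e (Monoid.Coprod.inl (QuotientGroup.mk h)) =
            QuotientGroup.mk (h : Gnk k)) ∧
          e (Monoid.Coprod.inr (Multiplicative.ofAdd 1)) =
            QuotientGroup.mk (PresentedGroup.of (rels := relsG k) (Fin.last k)) :=
  ⟨Gnk.Kk_normal, Gnk.Kk_le_Hk, inferInstance, Gnk.coprodEquivQuotient k,
    Gnk.coprodToQuotient_inl_mk, Gnk.coprodToQuotient_inr_ofAdd_one⟩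

/-- For every `k ≥ 2`, the quotient group `G_{k+1}^k / K_k` is naturally
isomorphic to the free product `(H_k / K_k) * ⟨b_{k+1}⟩` with `⟨b_{k+1}⟩ ≅ ℤ/2`: precisely,
`K_k` is a normal subgroup of `G_{k+1}^k` contained in `H_k`, and the homomorphism from the
free product `(H_k ⧸ K_k) * (ℤ/2)` to `G_{k+1}^k ⧸ K_k`, induced on the first factor by the
inclusion `H_k → G_{k+1}^k` and sending the generator of `ℤ/2` to the class of `b_{k+1}`,
is an isomorphism. -/
theorem stmt_11 (k : ℕ) (hk : 2 ≤ k) :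
    ∃ _ : (Kk k).Normal, Kk k ≤ Hk k ∧
      ∃ _ : ((Kk k).subgroupOf (Hk k)).Normal,
        ∃ e : Monoid.Coprod ((Hk k) ⧸ ((Kk k).subgroupOf (Hk k))) (Multiplicative (ZMod 2)) ≃*
            ((Gnk k) ⧸ (Kk k)),
          (∀ h : Hk k, e (Monoid.Coprod.inl (QuotientGroup.mk h)) =
            QuotientGroup.mk (h : Gnk k)) ∧
          e (Monoid.Coprod.inr (Multiplicative.ofAdd 1)) =
            QuotientGroup.mk (PresentedGroup.of (rels := relsG k) (Fin.last k)) :=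
  stmt_11_general k
end

section
/- The natural homomorphism from A = ⟨a,b,c | a² = b² = c² = 1⟩ to G_4^3 sending the generators a, b, c to the generators a, b, c of G_4^3 is injective; that is, A is (isomorphic to) the subgroup of G_4^3 generated by a, b, c. -/
/-!
Let `K` be the kernel of `A → (ℤ/2)²`, `a, b, c ↦ (1,0), (0,1), (1,1)`; it is free on
`u = abc`, `v = bca`, `w = cab`, and `1, b, a, c` represent its cosets, so `A ≃ K × (ℤ/2)²`.
In these coordinates left multiplication by a generator becomes a twisted shift
`(ξ, t) ↦ (κ ξ * f t, t + s)`, with `κ` the conjugation action on `K`. Let `d` act by the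
automorphism `ι` of `K` inverting `u, v, w`. The relators of `G_4^3` then act trivially,
because `abc` acts on `K` as conjugation by `u` and `ξ ↦ u ι(ξ) u⁻¹` is an involution (likewise
for `bca`, `cab`). Hence, modelling `K` by the free group `F₃` on `U, V, W`, the composite
`A → G_4^3 → Perm (F₃ × (ℤ/2)²)` is the regular action of `A`, which is faithful. Faithfulness
only needs the equivariant map `(ξ, t) ↦ ξ · (representative of t)` back to `A`, so neither
the freeness of `K` nor the bijectivity of the coordinates is ever used.
-/

/-- The generators of the free group on four letters `a, b, c, d`. -/
def x : Fin 4 → FreeGroup (Fin 4) := FreeGroup.of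

/-- The relators of the group `G_4^3`:
`a², b², c², d², (abcd)², (bcad)², (cabd)²`. -/
def rels43 : Set (FreeGroup (Fin 4)) :=
  {x 0 ^ 2, x 1 ^ 2, x 2 ^ 2, x 3 ^ 2,
    (x 0 * x 1 * x 2 * x 3) ^ 2, (x 1 * x 2 * x 0 * x 3) ^ 2, (x 2 * x 0 * x 1 * x 3) ^ 2}

abbrev G43 : Type := PresentedGroup rels43

def ga : G43 := PresentedGroup.of (rels := rels43) 0
def gb : G43 := PresentedGroup.of (rels := rels43) 1
def gc : G43 := PresentedGroup.of (rels := rels43) 2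
def gd : G43 := PresentedGroup.of (rels := rels43) 3

/-- The relators `a², b², c²` of the free product `A = ℤ/2 * ℤ/2 * ℤ/2`. -/
def relsA : Set (FreeGroup (Fin 3)) :=
  {FreeGroup.of 0 ^ 2, FreeGroup.of 1 ^ 2, FreeGroup.of 2 ^ 2}

abbrev A : Type := PresentedGroup relsA

open Function

lemma Function.Involutive.toPerm_sq {α : Type*} {f : α → α} (h : Involutive f) :
    h.toPerm f ^ 2 = 1 :=
  Equiv.ext h

section Equivariant

variable {H X : Type*} [Group H]

theorem equivariant_of_closure_eq_top {S : Set H} (hS : Subgroup.closure S = ⊤)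
    (φ : H →* Equiv.Perm X) (β : X → H) (hβ : ∀ s ∈ S, ∀ x, β (φ s x) = s * β x)
    (h : H) (x : X) : β (φ h x) = h * β x := by
  have hh : h ∈ Subgroup.closure S := hS ▸ Subgroup.mem_top h
  induction hh using Subgroup.closure_induction generalizing x with
  | mem s hs => exact hβ s hs x
  | one => simp
  | mul g h _ _ ihg ihh => rw [map_mul, Equiv.Perm.mul_apply, ihg, ihh, mul_assoc]
  | inv g _ ih =>
    rw [eq_inv_mul_iff_mul_eq, ← ih, map_inv, Equiv.Perm.coe_inv, Equiv.apply_symm_apply]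

theorem injective_of_equivariant {G : Type*} [Group G] [Nonempty X] (ψ : H →* G)
    (ρ : G →* Equiv.Perm X) (β : X → H) (hβ : ∀ h x, β (ρ (ψ h) x) = h * β x) : Injective ψ := by
  intro g h hgh
  obtain ⟨x⟩ := ‹Nonempty X›
  have hgx := hβ g x
  rw [hgh, hβ h x] at hgx
  exact (mul_right_cancel hgx).symm

end Equivariant

section TwistedShift

variable {F T : Type*} [Group F] [AddGroup T]

def twistedShift (κ : F →* F) (f : T → F) (s : T) (z : F × T) : F × T :=
  (κ z.1 * f z.2, z.2 + s)

@[simp]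
lemma twistedShift_apply (κ : F →* F) (f : T → F) (s : T) (ξ : F) (t : T) :
    twistedShift κ f s (ξ, t) = (κ ξ * f t, t + s) :=
  rfl

lemma twistedShift_involutive {κ : F →* F} {f : T → F} {s : T} (hκ : Involutive κ)
    (hf : ∀ t, κ (f t) * f (t + s) = 1) (hs : s + s = 0) : Involutive (twistedShift κ f s) := by
  rintro ⟨ξ, t⟩
  simp [mul_assoc, hf, hκ ξ, add_assoc, hs]

lemma twistedShift_equivariant {G : Type*} [Group G] (χ : F →* G) (τ : T → G) {κ : F →* F}
    {f : T → F} {s : T} {g : G} (hκ : ∀ ξ, χ (κ ξ) = g * χ ξ * g⁻¹)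
    (hf : ∀ t, χ (f t) * τ (t + s) = g * τ t) (z : F × T) :
    χ (twistedShift κ f s z).1 * τ (twistedShift κ f s z).2 = g * (χ z.1 * τ z.2) := by
  simp only [twistedShift, map_mul, hκ, mul_assoc, hf, inv_mul_cancel_left]

end TwistedShift

namespace A

def a : A := PresentedGroup.of 0
def b : A := PresentedGroup.of 1
def c : A := PresentedGroup.of 2

lemma of_mul_self (i : Fin 3) : (PresentedGroup.of i : A) * PresentedGroup.of i = 1 := by
  rw [← sq]
  exact PresentedGroup.one_of_mem (by fin_cases i <;> simp [relsA])

@[simp] lemma a_mul_self : a * a = 1 := of_mul_self 0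
@[simp] lemma b_mul_self : b * b = 1 := of_mul_self 1
@[simp] lemma c_mul_self : c * c = 1 := of_mul_self 2
@[simp] lemma a_mul_self_mul (y : A) : a * (a * y) = y := by rw [← mul_assoc, a_mul_self, one_mul]
@[simp] lemma b_mul_self_mul (y : A) : b * (b * y) = y := by rw [← mul_assoc, b_mul_self, one_mul]
@[simp] lemma c_mul_self_mul (y : A) : c * (c * y) = y := by rw [← mul_assoc, c_mul_self, one_mul]
@[simp] lemma a_inv : a⁻¹ = a := inv_eq_of_mul_eq_one_right a_mul_self
@[simp] lemma b_inv : b⁻¹ = b := inv_eq_of_mul_eq_one_right b_mul_self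
@[simp] lemma c_inv : c⁻¹ = c := inv_eq_of_mul_eq_one_right c_mul_self

end A

local notation "F₃" => FreeGroup (Fin 3)
local notation "U" => (FreeGroup.of 0 : F₃)
local notation "V" => (FreeGroup.of 1 : F₃)
local notation "W" => (FreeGroup.of 2 : F₃)

def freeToA : F₃ →* A := FreeGroup.lift ![A.a * A.b * A.c, A.b * A.c * A.a, A.c * A.a * A.b]

@[simp] lemma freeToA_U : freeToA U = A.a * A.b * A.c := by simp [freeToA]
@[simp] lemma freeToA_V : freeToA V = A.b * A.c * A.a := by simp [freeToA]
@[simp] lemma freeToA_W : freeToA W = A.c * A.a * A.b := by simp [freeToA]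

-- Conjugation by `a`, `b`, `c` on `K`, written in the basis `U, V, W` of `u, v, w`.
def κa : F₃ →* F₃ := FreeGroup.lift ![V, U, (U * W * V)⁻¹]
def κb : F₃ →* F₃ := FreeGroup.lift ![(V * U * W)⁻¹, W, V]
def κc : F₃ →* F₃ := FreeGroup.lift ![W, (W * V * U)⁻¹, U]

def ι : F₃ →* F₃ := FreeGroup.lift ![U⁻¹, V⁻¹, W⁻¹]

@[simp] lemma κa_U : κa U = V := by simp [κa]
@[simp] lemma κa_V : κa V = U := by simp [κa]
@[simp] lemma κa_W : κa W = (U * W * V)⁻¹ := by simp [κa]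
@[simp] lemma κb_U : κb U = (V * U * W)⁻¹ := by simp [κb]
@[simp] lemma κb_V : κb V = W := by simp [κb]
@[simp] lemma κb_W : κb W = V := by simp [κb]
@[simp] lemma κc_U : κc U = W := by simp [κc]
@[simp] lemma κc_V : κc V = (W * V * U)⁻¹ := by simp [κc]
@[simp] lemma κc_W : κc W = U := by simp [κc]
@[simp] lemma ι_U : ι U = U⁻¹ := by simp [ι]
@[simp] lemma ι_V : ι V = V⁻¹ := by simp [ι]
@[simp] lemma ι_W : ι W = W⁻¹ := by simp [ι]

lemma freeToA_κa (ξ : F₃) : freeToA (κa ξ) = A.a * freeToA ξ * A.a⁻¹ :=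
  DFunLike.congr_fun
    (FreeGroup.ext_hom (freeToA.comp κa) ((MulAut.conj A.a).toMonoidHom.comp freeToA)
      fun i => by fin_cases i <;> simp [mul_assoc]) ξ

lemma freeToA_κb (ξ : F₃) : freeToA (κb ξ) = A.b * freeToA ξ * A.b⁻¹ :=
  DFunLike.congr_fun
    (FreeGroup.ext_hom (freeToA.comp κb) ((MulAut.conj A.b).toMonoidHom.comp freeToA)
      fun i => by fin_cases i <;> simp [mul_assoc]) ξ

lemma freeToA_κc (ξ : F₃) : freeToA (κc ξ) = A.c * freeToA ξ * A.c⁻¹ :=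
  DFunLike.congr_fun
    (FreeGroup.ext_hom (freeToA.comp κc) ((MulAut.conj A.c).toMonoidHom.comp freeToA)
      fun i => by fin_cases i <;> simp [mul_assoc]) ξ

lemma κa_involutive : Involutive κa :=
  DFunLike.congr_fun (FreeGroup.ext_hom (κa.comp κa) (.id _) fun i => by fin_cases i <;> simp)

lemma κb_involutive : Involutive κb :=
  DFunLike.congr_fun (FreeGroup.ext_hom (κb.comp κb) (.id _) fun i => by fin_cases i <;> simp)

lemma κc_involutive : Involutive κc :=
  DFunLike.congr_fun (FreeGroup.ext_hom (κc.comp κc) (.id _) fun i => by fin_cases i <;> simp)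

lemma ι_involutive : Involutive ι :=
  DFunLike.congr_fun (FreeGroup.ext_hom (ι.comp ι) (.id _) fun i => by fin_cases i <;> simp)

lemma κa_κb_κc (ξ : F₃) : κa (κb (κc ξ)) = U * ξ * U⁻¹ :=
  DFunLike.congr_fun (FreeGroup.ext_hom (κa.comp (κb.comp κc)) (MulAut.conj U).toMonoidHom
    fun i => by fin_cases i <;> simp) ξ

lemma κb_κc_κa (ξ : F₃) : κb (κc (κa ξ)) = V * ξ * V⁻¹ :=
  DFunLike.congr_fun (FreeGroup.ext_hom (κb.comp (κc.comp κa)) (MulAut.conj V).toMonoidHom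
    fun i => by fin_cases i <;> simp) ξ

lemma κc_κa_κb (ξ : F₃) : κc (κa (κb ξ)) = W * ξ * W⁻¹ :=
  DFunLike.congr_fun (FreeGroup.ext_hom (κc.comp (κa.comp κb)) (MulAut.conj W).toMonoidHom
    fun i => by fin_cases i <;> simp) ξ

local notation "T" => Fin 2 × Fin 2

-- `transversal (i, j)` represents the coset of `a ^ i * b ^ j`.
def transversal (t : T) : A := ![![1, A.b], ![A.a, A.c]] t.1 t.2

-- `a * transversal t = freeToA (cocycleA t) * transversal (t + (1, 0))`, and likewise for `b`, `c`.
def cocycleA (t : T) : F₃ := ![![1, U], ![1, V⁻¹]] t.1 t.2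
def cocycleB (t : T) : F₃ := ![![1, 1], ![W⁻¹, V]] t.1 t.2
def cocycleC (t : T) : F₃ := ![![1, U⁻¹], ![W, 1]] t.1 t.2

def actA : Equiv.Perm (F₃ × T) :=
  Involutive.toPerm (twistedShift κa cocycleA (1, 0)) <| twistedShift_involutive κa_involutive
    (fun t => by fin_cases t <;> simp [cocycleA]) (by decide)

def actB : Equiv.Perm (F₃ × T) :=
  Involutive.toPerm (twistedShift κb cocycleB (0, 1)) <| twistedShift_involutive κb_involutive
    (fun t => by fin_cases t <;> simp [cocycleB]) (by decide)

def actC : Equiv.Perm (F₃ × T) :=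
  Involutive.toPerm (twistedShift κc cocycleC (1, 1)) <| twistedShift_involutive κc_involutive
    (fun t => by fin_cases t <;> simp [cocycleC]) (by decide)

def actD : Equiv.Perm (F₃ × T) :=
  Involutive.toPerm (twistedShift ι 1 0) <| twistedShift_involutive ι_involutive
    (fun t => by simp) (by decide)

lemma actA_sq : actA ^ 2 = 1 := Involutive.toPerm_sq _
lemma actB_sq : actB ^ 2 = 1 := Involutive.toPerm_sq _
lemma actC_sq : actC ^ 2 = 1 := Involutive.toPerm_sq _
lemma actD_sq : actD ^ 2 = 1 := Involutive.toPerm_sq _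

lemma actA_actB_actC_actD_sq : (actA * actB * actC * actD) ^ 2 = 1 := by
  ext ⟨ξ, t⟩ : 1
  fin_cases t <;>
    simp [actA, actB, actC, actD, cocycleA, cocycleB, cocycleC, sq, κa_κb_κc, ι_involutive ξ] <;>
    group

lemma actB_actC_actA_actD_sq : (actB * actC * actA * actD) ^ 2 = 1 := by
  ext ⟨ξ, t⟩ : 1
  fin_cases t <;>
    simp [actA, actB, actC, actD, cocycleA, cocycleB, cocycleC, sq, κb_κc_κa, ι_involutive ξ] <;>
    group

lemma actC_actA_actB_actD_sq : (actC * actA * actB * actD) ^ 2 = 1 := by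
  ext ⟨ξ, t⟩ : 1
  fin_cases t <;>
    simp [actA, actB, actC, actD, cocycleA, cocycleB, cocycleC, sq, κc_κa_κb, ι_involutive ξ] <;>
    group

lemma lift_acts_eq_one_of_mem : ∀ r ∈ rels43, FreeGroup.lift ![actA, actB, actC, actD] r = 1 := by
  simp only [rels43, Set.mem_insert_iff, Set.mem_singleton_iff, forall_eq_or_imp, forall_eq, x,
    map_pow, map_mul, FreeGroup.lift_apply_of, Matrix.cons_val]
  exact ⟨actA_sq, actB_sq, actC_sq, actD_sq, actA_actB_actC_actD_sq, actB_actC_actA_actD_sq,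
    actC_actA_actB_actD_sq⟩

def G43.act : G43 →* Equiv.Perm (F₃ × T) := PresentedGroup.toGroup lift_acts_eq_one_of_mem

lemma lift_castSucc_eq_one_of_mem :
    ∀ r ∈ relsA, FreeGroup.lift (fun i : Fin 3 => (PresentedGroup.of i.castSucc : G43)) r = 1 := by
  simp only [relsA, Set.mem_insert_iff, Set.mem_singleton_iff, forall_eq_or_imp, forall_eq,
    map_pow, FreeGroup.lift_apply_of]
  refine ⟨?_, ?_, ?_⟩ <;> exact PresentedGroup.one_of_mem (by simp [rels43, x])

def A.toG43 : A →* G43 := PresentedGroup.toGroup lift_castSucc_eq_one_of_mem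

def ofCoords (z : F₃ × T) : A := freeToA z.1 * transversal z.2

lemma ofCoords_act_toG43 (y : A) (z : F₃ × T) :
    ofCoords (G43.act (A.toG43 y) z) = y * ofCoords z := by
  refine equivariant_of_closure_eq_top (PresentedGroup.closure_range_of relsA)
    (G43.act.comp A.toG43) ofCoords ?_ y z
  rintro _ ⟨i, rfl⟩ z
  fin_cases i
  · exact twistedShift_equivariant freeToA transversal freeToA_κa
      (fun t => by fin_cases t <;> simp [cocycleA, transversal, mul_assoc]) z
  · exact twistedShift_equivariant freeToA transversal freeToA_κb
      (fun t => by fin_cases t <;> simp [cocycleB, transversal, mul_assoc]) z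
  · exact twistedShift_equivariant freeToA transversal freeToA_κc
      (fun t => by fin_cases t <;> simp [cocycleC, transversal, mul_assoc]) z

/-- The natural homomorphism from `A = ⟨a,b,c | a² = b² = c² = 1⟩` to `G_4^3`
sending the generators `a, b, c` to the generators `a, b, c` of `G_4^3` is injective;
that is, `A` is (isomorphic to) the subgroup of `G_4^3` generated by `a, b, c`. -/
theorem stmt_18 : ∃ ψ : A →* G43,
    (∀ i : Fin 3, ψ (PresentedGroup.of (rels := relsA) i) =
      PresentedGroup.of (rels := rels43) (Fin.castSucc i)) ∧
    Function.Injective ψ :=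
  ⟨A.toG43, fun _ => PresentedGroup.toGroup.of _,
    injective_of_equivariant A.toG43 G43.act ofCoords ofCoords_act_toG43⟩
end
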